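/- arXiv:2006.11622 — 3 statements merged into one kernel-verified Lean document; each statement's English description precedes it below -/
import Mathlib

section
/- Let 0 < M < 2, let (a_n)_{n≥2}, (b_n)_{n≥2} be nonnegative reals with ∑_{n=2}^∞ n(n-1)(a_n+b_n) ≤ M, and let r_f = (-1+√(1+2M-M²))/M. Then for every r with 0 ≤ r ≤ r_f, r + ∑_{n=2}^∞ (a_n+b_n) r^n ≤ 1 - M/2. -/
open Real Set

theorem stmt_11 (M : ℝ) (hM0 : 0 < M) (hM2 : M < 2) (a b : ℕ → ℝ)
    (ha : ∀ n, 2 ≤ n → 0 ≤ a n) (hb : ∀ n, 2 ≤ n → 0 ≤ b n)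
    (hsum : Summable (fun n : ℕ => ((n : ℝ) + 2) * ((n : ℝ) + 1) * (a (n + 2) + b (n + 2))))
    (hle : (∑' n : ℕ, ((n : ℝ) + 2) * ((n : ℝ) + 1) * (a (n + 2) + b (n + 2))) ≤ M) :
    ∀ r : ℝ, 0 ≤ r → r ≤ (-1 + Real.sqrt (1 + 2 * M - M ^ 2)) / M →
      r + (∑' n : ℕ, (a (n + 2) + b (n + 2)) * r ^ (n + 2)) ≤ 1 - M / 2 := by
  intro r hr0 hrle
  have hpos : (0:ℝ) ≤ 1 + 2 * M - M ^ 2 := by nlinarith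
  have hs2 : Real.sqrt (1 + 2 * M - M ^ 2) ^ 2 = 1 + 2 * M - M ^ 2 := Real.sq_sqrt hpos
  have hsnn : 0 ≤ Real.sqrt (1 + 2 * M - M ^ 2) := Real.sqrt_nonneg _
  have hMr : r * M ≤ -1 + Real.sqrt (1 + 2 * M - M ^ 2) := (le_div_iff₀ hM0).mp hrle
  have key : r + M * r ^ 2 / 2 ≤ 1 - M / 2 := by nlinarith [sq_nonneg (M * r + 1), mul_nonneg hr0 hM0.le]
  have hr1 : r ≤ 1 := by nlinarith [mul_nonneg (mul_nonneg hM0.le hr0) hr0]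
  have hcnn : ∀ n : ℕ, 0 ≤ a (n + 2) + b (n + 2) := fun n =>
    add_nonneg (ha _ (by omega)) (hb _ (by omega))
  have hfg : ∀ n : ℕ, (a (n + 2) + b (n + 2)) * r ^ (n + 2) ≤
      ((n : ℝ) + 2) * ((n : ℝ) + 1) * (a (n + 2) + b (n + 2)) * (r ^ 2 / 2) := by
    intro n
    have h1 : r ^ (n + 2) ≤ r ^ 2 := pow_le_pow_of_le_one hr0 hr1 (by omega)
    have h2 : (0:ℝ) ≤ (n : ℝ) := Nat.cast_nonneg n
    have h3 : 0 ≤ a (n + 2) + b (n + 2) := hcnn n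
    have h4 : 0 ≤ r ^ 2 := sq_nonneg r
    nlinarith [mul_le_mul_of_nonneg_left h1 h3, mul_nonneg (mul_nonneg h2 h3) h4]
  have hgsum : Summable (fun n : ℕ =>
      ((n : ℝ) + 2) * ((n : ℝ) + 1) * (a (n + 2) + b (n + 2)) * (r ^ 2 / 2)) :=
    hsum.mul_right _
  have hfsum : Summable (fun n : ℕ => (a (n + 2) + b (n + 2)) * r ^ (n + 2)) :=
    Summable.of_nonneg_of_le (fun n => mul_nonneg (hcnn n) (pow_nonneg hr0 _)) hfg hgsum
  have htle : (∑' n : ℕ, (a (n + 2) + b (n + 2)) * r ^ (n + 2)) ≤ M * (r ^ 2 / 2) := by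
    calc (∑' n : ℕ, (a (n + 2) + b (n + 2)) * r ^ (n + 2))
        ≤ ∑' n : ℕ, ((n : ℝ) + 2) * ((n : ℝ) + 1) * (a (n + 2) + b (n + 2)) * (r ^ 2 / 2) :=
          Summable.tsum_le_tsum hfg hfsum hgsum
      _ = (∑' n : ℕ, ((n : ℝ) + 2) * ((n : ℝ) + 1) * (a (n + 2) + b (n + 2))) * (r ^ 2 / 2) :=
          tsum_mul_right
      _ ≤ M * (r ^ 2 / 2) := by
          apply mul_le_mul_of_nonneg_right hle
          positivity
  nlinarith [htle, key]
end

section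
/- Let 0 ≤ α < 1 and suppose f = h + ḡ is harmonic on 𝔻 with h(z) = z + ∑_{n≥2} a_n z^n, g(z) = ∑_{n≥2} b_n z^n, satisfying Re(h'(z) - α) > |g'(z)| for all z ∈ 𝔻. Then for all z ∈ 𝔻, |z| + 2(1-α)∑_{n=2}^∞ (-1)^{n-1}|z|^n/n ≤ |f(z)| ≤ |z| + 2(1-α)∑_{n=2}^∞ |z|^n/n; equivalently, |z| - 2(1-α)(|z| - log(1+|z|)) ≤ |f(z)| ≤ (2α-1)|z| - 2(1-α)log(1-|z|). -/
open Complex Metric intervalIntegral MeasureTheory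

lemma key_bound (α : ℝ) (hα0 : 0 ≤ α) (hα1 : α < 1) (P : ℂ → ℂ)
    (hP : DifferentiableOn ℂ P (Metric.ball 0 1)) (hP0 : P 0 = 1)
    (hre : ∀ ζ ∈ Metric.ball (0:ℂ) 1, α < (P ζ).re) (w : ℂ) (hw : w ∈ Metric.ball (0:ℂ) 1) :
    α + (1 - α) * ((1 - ‖w‖) / (1 + ‖w‖)) ≤ (P w).re ∧
      ‖P w‖ ≤ α + (1 - α) * ((1 + ‖w‖) / (1 - ‖w‖)) := by
  set ω : ℂ → ℂ := fun ζ => (P ζ - 1) / (P ζ + 1 - 2*α) with hω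
  have hden : ∀ ζ ∈ Metric.ball (0:ℂ) 1, P ζ + 1 - 2*α ≠ 0 := by
    intro ζ hζ hc
    have h1 := hre ζ hζ
    have h2 : (P ζ + 1 - 2*α).re = (P ζ).re + 1 - 2*α := by
      simp [Complex.sub_re, Complex.add_re]
    rw [hc] at h2
    simp at h2
    linarith
  have hωd : DifferentiableOn ℂ ω (Metric.ball 0 1) := by
    apply DifferentiableOn.div
    · exact hP.sub (differentiableOn_const _)
    · exact (hP.add (differentiableOn_const _)).sub (differentiableOn_const _)
    · exact hden
  have hmaps : Set.MapsTo ω (Metric.ball (0:ℂ) 1) (Metric.ball (0:ℂ) 1) := by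
    intro ζ hζ
    rw [mem_ball_zero_iff]
    have h1 := hre ζ hζ
    have hlt : Complex.normSq (P ζ - 1) < Complex.normSq (P ζ + 1 - 2*α) := by
      have e1 : P ζ + 1 - 2*(α:ℂ) = P ζ + ((1 - 2*α : ℝ) : ℂ) := by push_cast; ring
      rw [e1]
      simp only [Complex.normSq_apply, Complex.sub_re, Complex.add_re, Complex.sub_im,
        Complex.add_im, Complex.one_re, Complex.one_im, Complex.ofReal_re, Complex.ofReal_im]
      nlinarith [sq_nonneg ((P ζ).re - α)]
    have habs : ‖P ζ - 1‖ < ‖P ζ + 1 - 2*(α:ℂ)‖ := by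
      rw [Complex.norm_def, Complex.norm_def]
      exact Real.sqrt_lt_sqrt (Complex.normSq_nonneg _) hlt
    have hpos : (0:ℝ) < ‖P ζ + 1 - 2*(α:ℂ)‖ := lt_of_le_of_lt (norm_nonneg _) habs
    show ‖(P ζ - 1) / (P ζ + 1 - 2*α)‖ < 1
    rw [norm_div, div_lt_one hpos]
    exact habs
  have hω0 : ω 0 = 0 := by simp [hω, hP0]
  have hw1 : ‖w‖ < 1 := by rwa [mem_ball_zero_iff] at hw
  have hschwarz : ‖ω w‖ ≤ ‖w‖ :=
    Complex.norm_le_norm_of_mapsTo_ball_self hωd (hmaps.mono_right ball_subset_closedBall) hω0 hw1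
  set u := ω w with hu
  set t := ‖w‖ with htdef
  have ht0 : 0 ≤ t := norm_nonneg _
  have ht1 : t < 1 := hw1
  have hut : ‖u‖ ≤ t := hschwarz
  have hu1 : ‖u‖ < 1 := lt_of_le_of_lt hut ht1
  have h1u : (1:ℂ) - u ≠ 0 := by
    intro hc
    have hu1' : u = 1 := by linear_combination -hc
    rw [hu1'] at hu1
    simp at hu1
  have hdenw : P w + 1 - 2*α ≠ 0 := hden w hw
  have hident : u * (P w + 1 - 2*α) = P w - 1 := by
    rw [hu, hω]
    field_simp
  have hkey : (P w - α) * (1 - u) = (1 - α) * (1 + u) := by linear_combination -hident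
  have hPw : P w = (α:ℂ) + (1 - α) * ((1 + u) / (1 - u)) := by
    field_simp
    linear_combination hkey
  have hn1u : (0:ℝ) < ‖(1:ℂ) - u‖ := norm_pos_iff.mpr h1u
  have hn1u_le : ‖(1:ℂ) - u‖ ≤ 1 + t := le_trans (norm_sub_le _ _) (by rw [norm_one]; linarith)
  have hn1u_ge : 1 - t ≤ ‖(1:ℂ) - u‖ := by
    have := norm_sub_norm_le (1:ℂ) u
    simp only [norm_one] at this
    linarith
  have hadd_le : ‖(1:ℂ) + u‖ ≤ 1 + t := le_trans (norm_add_le _ _) (by rw [norm_one]; linarith)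
  constructor
  · -- real part lower bound
    have hre_q : ((1 + u) / (1 - u)).re = (1 - Complex.normSq u) / Complex.normSq (1 - u) := by
      rw [Complex.div_re]
      congr 1
      simp [Complex.normSq_apply, Complex.add_re, Complex.add_im, Complex.sub_re, Complex.sub_im]
      ring
    have hq_ge : (1 - t) / (1 + t) ≤ ((1 + u) / (1 - u)).re := by
      rw [hre_q]
      have hnu : Complex.normSq u = ‖u‖^2 := by
        rw [← Complex.sq_norm]
      have hns : Complex.normSq (1 - u) = ‖(1:ℂ) - u‖^2 := by
        rw [← Complex.sq_norm]
      have h2 : Complex.normSq (1 - u) ≤ (1+t)^2 := by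
        rw [hns]; nlinarith
      have h3 : 0 ≤ 1 - Complex.normSq u := by
        rw [hnu]; nlinarith [norm_nonneg u]
      have h4 : (1 - t^2) ≤ 1 - Complex.normSq u := by
        rw [hnu]; nlinarith [norm_nonneg u]
      have h5 : (0:ℝ) < Complex.normSq (1 - u) := by rw [hns]; positivity
      calc (1 - t)/(1 + t) = (1 - t^2)/(1+t)^2 := by
            rw [div_eq_div_iff (by linarith) (by positivity)]; ring
        _ ≤ (1 - Complex.normSq u)/(1+t)^2 := by gcongr
        _ ≤ (1 - Complex.normSq u)/Complex.normSq (1-u) := by gcongr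
    have hre_eq : (P w).re = α + (1-α) * ((1 + u) / (1 - u)).re := by
      rw [hPw]
      simp [Complex.add_re, Complex.mul_re, Complex.sub_re, Complex.sub_im]
    rw [hre_eq]
    have h1α : (0:ℝ) ≤ 1 - α := by linarith
    nlinarith [hq_ge]
  · -- norm upper bound
    have hq_le : ‖(1 + u) / (1 - u)‖ ≤ (1 + t) / (1 - t) := by
      rw [norm_div, div_le_div_iff₀ hn1u (by linarith)]
      nlinarith [norm_nonneg ((1:ℂ)+u)]
    calc ‖P w‖ ≤ ‖(α:ℂ)‖ + ‖((1:ℂ) - α) * ((1 + u) / (1 - u))‖ := by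
          rw [hPw]; exact norm_add_le _ _
      _ = α + (1 - α) * ‖(1 + u) / (1 - u)‖ := by
          rw [norm_mul]
          have h1 : ‖((α:ℝ):ℂ)‖ = α := by
            rw [Complex.norm_real]; exact Real.norm_of_nonneg hα0
          have h2 : ‖(1:ℂ) - α‖ = 1 - α := by
            rw [show (1:ℂ) - α = ((1 - α : ℝ) : ℂ) by push_cast; ring, Complex.norm_real]
            exact Real.norm_of_nonneg (by linarith)
          rw [h1, h2]
      _ ≤ α + (1 - α) * ((1 + t) / (1 - t)) := by
          have h1α : (0:ℝ) ≤ 1 - α := by linarith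
          nlinarith [hq_le, norm_nonneg ((1+u)/(1-u))]

lemma deriv_two_sided (α : ℝ) (hα0 : 0 ≤ α) (hα1 : α < 1) (h g : ℂ → ℂ)
    (hh : DifferentiableOn ℂ h (Metric.ball (0 : ℂ) 1))
    (hg : DifferentiableOn ℂ g (Metric.ball (0 : ℂ) 1))
    (hh1 : deriv h 0 = 1) (hg1 : deriv g 0 = 0)
    (hcond : ∀ z ∈ Metric.ball (0 : ℂ) 1, (deriv h z).re - α > ‖deriv g z‖)
    (w : ℂ) (hw : w ∈ Metric.ball (0:ℂ) 1) :
    α + (1 - α) * ((1 - ‖w‖) / (1 + ‖w‖)) ≤ (deriv h w).re - ‖deriv g w‖ ∧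
      ‖deriv h w‖ + ‖deriv g w‖ ≤ α + (1 - α) * ((1 + ‖w‖) / (1 - ‖w‖)) := by
  have hh' : DifferentiableOn ℂ (deriv h) (Metric.ball 0 1) :=
    ((hh.analyticOnNhd isOpen_ball).deriv).differentiableOn
  have hg' : DifferentiableOn ℂ (deriv g) (Metric.ball 0 1) :=
    ((hg.analyticOnNhd isOpen_ball).deriv).differentiableOn
  have main : ∀ c : ℂ, ‖c‖ = 1 →
      (α + (1 - α) * ((1 - ‖w‖) / (1 + ‖w‖)) ≤ (deriv h w + c * deriv g w).re ∧
        ‖deriv h w + c * deriv g w‖ ≤ α + (1 - α) * ((1 + ‖w‖) / (1 - ‖w‖))) := by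
    intro c hc
    apply key_bound α hα0 hα1 (fun ζ => deriv h ζ + c * deriv g ζ)
    · exact hh'.add (hg'.const_mul c)
    · rw [hh1, hg1]; ring
    · intro ζ hζ
      have h1 := hcond ζ hζ
      have h2 : -‖c * deriv g ζ‖ ≤ (c * deriv g ζ).re :=
        (abs_le.1 (Complex.abs_re_le_norm _)).1
      rw [norm_mul, hc, one_mul] at h2
      simp only [Complex.add_re]
      linarith
    · exact hw
  set A := deriv h w with hA
  set B := deriv g w with hB
  have hcondw := hcond w hw
  rw [← hA, ← hB] at hcondw
  have hA0 : A ≠ 0 := by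
    intro hc
    rw [hc] at hcondw
    simp only [Complex.zero_re] at hcondw
    linarith [norm_nonneg B]
  constructor
  · -- lower bound
    by_cases hB0 : B = 0
    · have := (main 1 (by simp)).1
      rw [hB0] at this ⊢
      simpa using this
    · set c : ℂ := -((starRingEnd ℂ) B) / (‖B‖ : ℂ) with hcdef
      have hb : (0:ℝ) < ‖B‖ := norm_pos_iff.mpr hB0
      have hc : ‖c‖ = 1 := by
        rw [hcdef, norm_div, norm_neg, RCLike.norm_conj, Complex.norm_real,
          Real.norm_of_nonneg (norm_nonneg _), div_self (ne_of_gt hb)]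
      have hb' : ((‖B‖:ℝ):ℂ) ≠ 0 := Complex.ofReal_ne_zero.mpr (ne_of_gt hb)
      have hmc : (starRingEnd ℂ) B * B = ((‖B‖^2 : ℝ) : ℂ) := by
        rw [mul_comm, Complex.mul_conj, ← Complex.sq_norm]
      have hcB : c * B = -(‖B‖ : ℂ) := by
        have h1 : c * B = -((starRingEnd ℂ) B * B) / (‖B‖:ℂ) := by rw [hcdef]; ring
        rw [h1, hmc, div_eq_iff hb']
        push_cast
        ring
      have := (main c hc).1
      rw [hcB] at this
      have hre : (A + -(‖B‖:ℂ)).re = A.re - ‖B‖ := by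
        simp [Complex.add_re]
        ring
      rw [hre] at this
      exact this
  · -- upper bound
    by_cases hB0 : B = 0
    · have := (main 1 (by simp)).2
      rw [hB0] at this ⊢
      simpa using this
    · set c : ℂ := A * (starRingEnd ℂ) B / ((‖A‖ * ‖B‖ : ℝ) : ℂ) with hcdef
      have ha : (0:ℝ) < ‖A‖ := norm_pos_iff.mpr hA0
      have hb : (0:ℝ) < ‖B‖ := norm_pos_iff.mpr hB0
      have hc : ‖c‖ = 1 := by
        rw [hcdef, norm_div, norm_mul, RCLike.norm_conj, Complex.norm_real,
          Real.norm_of_nonneg (by positivity), div_self (by positivity)]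
      have hmc : (starRingEnd ℂ) B * B = ((‖B‖^2 : ℝ) : ℂ) := by
        rw [mul_comm, Complex.mul_conj, ← Complex.sq_norm]
      have hab' : ((‖A‖ * ‖B‖ : ℝ) : ℂ) ≠ 0 := by
        rw [Complex.ofReal_ne_zero]
        positivity
      have ha' : ((‖A‖:ℝ):ℂ) ≠ 0 := Complex.ofReal_ne_zero.mpr (ne_of_gt ha)
      have hcB : c * B = A * ((‖B‖ / ‖A‖ : ℝ) : ℂ) := by
        have h1 : c * B = A * ((starRingEnd ℂ) B * B) / ((‖A‖ * ‖B‖ : ℝ) : ℂ) := by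
          rw [hcdef]; ring
        rw [h1, hmc, div_eq_iff hab']
        push_cast
        have ha'' : ((‖A‖ : ℝ):ℂ) ≠ 0 := ha'
        field_simp [ha'']
      have hnorm : ‖A + c * B‖ = ‖A‖ + ‖B‖ := by
        rw [hcB, show A + A * ((‖B‖ / ‖A‖ : ℝ) : ℂ) = A * ((1 + ‖B‖/‖A‖ : ℝ) : ℂ) by
          push_cast; ring]
        rw [norm_mul, Complex.norm_real, Real.norm_of_nonneg (by positivity)]
        have haR : ‖A‖ ≠ 0 := ne_of_gt ha
        field_simp [haR]
      have := (main c hc).2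
      rw [hnorm] at this
      exact this

theorem stmt_18 (α : ℝ) (hα0 : 0 ≤ α) (hα1 : α < 1) (h g f : ℂ → ℂ)
    (hh : DifferentiableOn ℂ h (Metric.ball (0 : ℂ) 1))
    (hg : DifferentiableOn ℂ g (Metric.ball (0 : ℂ) 1))
    (hh0 : h 0 = 0) (hh1 : deriv h 0 = 1) (hg0 : g 0 = 0) (hg1 : deriv g 0 = 0)
    (hcond : ∀ z ∈ Metric.ball (0 : ℂ) 1, (deriv h z).re - α > ‖deriv g z‖)
    (hf : ∀ z, f z = h z + (starRingEnd ℂ) (g z)) :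
    ∀ z ∈ Metric.ball (0 : ℂ) 1,
      ‖z‖ + 2 * (1 - α) * (∑' n : ℕ, (-1 : ℝ) ^ (n + 1) * ‖z‖ ^ (n + 2) / ((n : ℝ) + 2)) ≤ ‖f z‖ ∧
      ‖f z‖ ≤ ‖z‖ + 2 * (1 - α) * (∑' n : ℕ, ‖z‖ ^ (n + 2) / ((n : ℝ) + 2)) := by
  intro z hz
  by_cases hz0 : z = 0
  · subst hz0
    have hf0 : f 0 = 0 := by rw [hf 0, hh0, hg0]; simp
    have hzp : ∀ n : ℕ, (0:ℝ) ^ (n + 2) = 0 := fun n => zero_pow (by omega)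
    simp [hf0, hzp]
  set r := ‖z‖ with hrdef
  have hr0 : 0 ≤ r := norm_nonneg z
  have hrpos : 0 < r := norm_pos_iff.mpr hz0
  have hr1 : r < 1 := by rwa [mem_ball_zero_iff] at hz
  -- tsum closed forms
  have habs : |r| < 1 := by rwa [_root_.abs_of_nonneg hr0]
  have hlog := Real.hasSum_pow_div_log_of_abs_lt_one habs
  have hsum_pos : (∑' n : ℕ, r ^ (n + 2) / ((n : ℝ) + 2)) = -Real.log (1 - r) - r := by
    have h2 := (hasSum_nat_add_iff' (f := fun m : ℕ => r ^ (m + 1) / ((m:ℝ) + 1)) 1).mpr hlog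
    simp only [Finset.range_one, Finset.sum_singleton] at h2
    have h3 : (fun n : ℕ => r ^ (n + 2) / ((n:ℝ) + 2)) =
        (fun n : ℕ => r ^ (n + 1 + 1) / ((↑(n + 1):ℝ) + 1)) := by
      funext n; push_cast; ring_nf
    rw [h3]
    rw [h2.tsum_eq]
    norm_num
  have habs' : |(-r)| < 1 := by rwa [abs_neg]
  have hlog' := Real.hasSum_pow_div_log_of_abs_lt_one habs'
  have hsum_neg : (∑' n : ℕ, (-1:ℝ) ^ (n + 1) * r ^ (n + 2) / ((n : ℝ) + 2))
      = Real.log (1 + r) - r := by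
    have h2 := ((hasSum_nat_add_iff'
      (f := fun m : ℕ => (-r) ^ (m + 1) / ((m:ℝ) + 1)) 1).mpr hlog').neg
    simp only [Finset.range_one, Finset.sum_singleton] at h2
    have h3 : (fun n : ℕ => (-1:ℝ) ^ (n + 1) * r ^ (n + 2) / ((n:ℝ) + 2)) =
        (fun n : ℕ => -((-r) ^ (n + 1 + 1) / ((↑(n + 1):ℝ) + 1))) := by
      funext n
      have e : (-r) ^ (n + 1 + 1) = -((-1:ℝ)^(n+1) * r^(n+2)) := by
        rw [pow_succ, neg_pow]
        ring
      rw [e]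
      push_cast
      ring
    rw [h3, h2.tsum_eq]
    rw [show (1:ℝ) - -r = 1 + r by ring]
    norm_num
    ring
  -- differentiability and continuity of derivatives
  have hhA := (hh.analyticOnNhd isOpen_ball).deriv
  have hgA := (hg.analyticOnNhd isOpen_ball).deriv
  have hhc : ContinuousOn (deriv h) (Metric.ball (0:ℂ) 1) := hhA.continuousOn
  have hgc : ContinuousOn (deriv g) (Metric.ball (0:ℂ) 1) := hgA.continuousOn
  -- membership
  have huIcc : Set.uIcc (0:ℝ) 1 = Set.Icc 0 1 := Set.uIcc_of_le (by norm_num)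
  have hmem : ∀ t ∈ Set.uIcc (0:ℝ) 1, (t:ℂ) * z ∈ Metric.ball (0:ℂ) 1 := by
    intro t ht
    rw [huIcc] at ht
    rw [mem_ball_zero_iff, norm_mul, Complex.norm_real, Real.norm_eq_abs,
      _root_.abs_of_nonneg ht.1, ← hrdef]
    nlinarith [ht.1, ht.2, hr0, hr1]
  have hnormtz : ∀ t : ℝ, 0 ≤ t → ‖(t:ℂ) * z‖ = t * r := by
    intro t ht
    rw [norm_mul, Complex.norm_real, Real.norm_eq_abs, _root_.abs_of_nonneg ht, ← hrdef]
  -- the derivative function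
  set F' : ℝ → ℂ := fun t => deriv h ((t:ℂ)*z) * z + (starRingEnd ℂ) (deriv g ((t:ℂ)*z) * z)
    with hF'def
  have hFderiv : ∀ t ∈ Set.uIcc (0:ℝ) 1,
      HasDerivAt (fun t : ℝ => h ((t:ℂ)*z) + (starRingEnd ℂ) (g ((t:ℂ)*z))) (F' t) t := by
    intro t ht
    have hmem' := hmem t ht
    have h1 : HasDerivAt (fun y : ℝ => h ((y:ℂ)*z)) (deriv h ((t:ℂ)*z) * z) t := by
      have hinner : HasDerivAt (fun c : ℂ => c * z) z ((t:ℂ)) := hasDerivAt_mul_const z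
      have houter : HasDerivAt h (deriv h ((t:ℂ)*z)) ((t:ℂ)*z) :=
        (hh.differentiableAt (isOpen_ball.mem_nhds hmem')).hasDerivAt
      exact (HasDerivAt.comp (t:ℂ) houter hinner).comp_ofReal
    have h2 : HasDerivAt (fun y : ℝ => g ((y:ℂ)*z)) (deriv g ((t:ℂ)*z) * z) t := by
      have hinner : HasDerivAt (fun c : ℂ => c * z) z ((t:ℂ)) := hasDerivAt_mul_const z
      have houter : HasDerivAt g (deriv g ((t:ℂ)*z)) ((t:ℂ)*z) :=
        (hg.differentiableAt (isOpen_ball.mem_nhds hmem')).hasDerivAt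
      exact (HasDerivAt.comp (t:ℂ) houter hinner).comp_ofReal
    simp only [hF'def, starRingEnd_apply]
    exact h1.add h2.star
  have hc1 : ContinuousOn (fun t : ℝ => (t:ℂ)*z) (Set.uIcc (0:ℝ) 1) :=
    (Complex.continuous_ofReal.mul continuous_const).continuousOn
  have hF'cont : ContinuousOn F' (Set.uIcc (0:ℝ) 1) := by
    apply ContinuousOn.add
    · exact (hhc.comp hc1 hmem).mul continuousOn_const
    · exact Complex.continuous_conj.comp_continuousOn
        ((hgc.comp hc1 hmem).mul continuousOn_const)
  have hF'int : IntervalIntegrable F' volume 0 1 := hF'cont.intervalIntegrable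
  have hFTC : (∫ t in (0:ℝ)..1, F' t) = f z := by
    rw [intervalIntegral.integral_eq_sub_of_hasDerivAt hFderiv hF'int, hf z]
    simp only [Complex.ofReal_one, one_mul, Complex.ofReal_zero, zero_mul, hh0, hg0, map_zero,
      add_zero, sub_zero]
  -- positivity of denominators
  have hposU : ∀ t ∈ Set.uIcc (0:ℝ) 1, 0 < 1 - t*r := by
    intro t ht; rw [huIcc] at ht; nlinarith [ht.1, ht.2]
  have hposL : ∀ t ∈ Set.uIcc (0:ℝ) 1, 0 < 1 + t*r := by
    intro t ht; rw [huIcc] at ht; nlinarith [ht.1, ht.2]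
  constructor
  · -- LOWER BOUND
    set L : ℝ → ℝ := fun t => (2*α-1)*r^2 + 2*(1-α)*(r^2/(1+t*r)) with hLdef
    have hLcont : ContinuousOn L (Set.uIcc (0:ℝ) 1) := by
      apply ContinuousOn.add continuousOn_const
      apply ContinuousOn.mul continuousOn_const
      exact ContinuousOn.div continuousOn_const
        (continuousOn_const.add (continuousOn_id.mul continuousOn_const))
        (fun t ht => ne_of_gt (hposL t ht))
    have hLint : IntervalIntegrable L volume 0 1 := hLcont.intervalIntegrable
    have hReint : IntervalIntegrable (fun t => ((starRingEnd ℂ) z * F' t).re) volume 0 1 :=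
      (Complex.continuous_re.comp_continuousOn
        (continuousOn_const.mul hF'cont)).intervalIntegrable
    have hptw : ∀ t ∈ Set.Icc (0:ℝ) 1, L t ≤ ((starRingEnd ℂ) z * F' t).re := by
      intro t ht
      have ht' : t ∈ Set.uIcc (0:ℝ) 1 := by rw [huIcc]; exact ht
      have hmem' := hmem t ht'
      have hs : ‖(t:ℂ)*z‖ = t*r := hnormtz t ht.1
      have hbd := (deriv_two_sided α hα0 hα1 h g hh hg hh1 hg1 hcond ((t:ℂ)*z) hmem').1
      rw [hs] at hbd
      set A := deriv h ((t:ℂ)*z)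
      set B := deriv g ((t:ℂ)*z)
      have hzz : (starRingEnd ℂ) z * z = ((r^2 : ℝ) : ℂ) := by
        rw [mul_comm, Complex.mul_conj, ← Complex.sq_norm]
      have hre1 : ((starRingEnd ℂ) z * (A * z)).re = r^2 * A.re := by
        rw [show (starRingEnd ℂ) z * (A * z) = ((starRingEnd ℂ) z * z) * A by ring, hzz,
          Complex.mul_re, Complex.ofReal_re, Complex.ofReal_im]
        ring
      have hre2 : -(r^2 * ‖B‖) ≤ ((starRingEnd ℂ) z * (starRingEnd ℂ) (B * z)).re := by
        have he : (starRingEnd ℂ) z * (starRingEnd ℂ) (B * z) = (starRingEnd ℂ) (B * z * z) := by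
          rw [← map_mul]; ring_nf
        rw [he, Complex.conj_re]
        have hn : ‖B * z * z‖ = ‖B‖ * r^2 := by
          rw [norm_mul, norm_mul]; ring
        have := (abs_le.1 (Complex.abs_re_le_norm (B * z * z))).1
        rw [hn] at this
        linarith
      have hre : ((starRingEnd ℂ) z * F' t).re
          = ((starRingEnd ℂ) z * (A * z)).re + ((starRingEnd ℂ) z * (starRingEnd ℂ) (B * z)).re := by
        rw [hF'def]
        simp only [mul_add, Complex.add_re]
        rfl
      rw [hre, hre1]
      have hid : L t = r^2 * (α + (1 - α) * ((1 - t*r) / (1 + t*r))) := by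
        rw [hLdef]
        have := hposL t ht'
        have : 1 + r*t ≠ 0 := by rw [mul_comm]; exact this.ne'
        field_simp
        ring
      rw [hid]
      have hmul : r^2 * (α + (1 - α) * ((1 - t*r) / (1 + t*r))) ≤ r^2 * (A.re - ‖B‖) :=
        mul_le_mul_of_nonneg_left hbd (sq_nonneg r)
      nlinarith [hre2, hmul]
    have hmono := intervalIntegral.integral_mono_on (by norm_num : (0:ℝ) ≤ 1) hLint hReint hptw
    -- value of ∫ L
    have hΨ : ∀ t ∈ Set.uIcc (0:ℝ) 1,
        HasDerivAt (fun t => (2*α-1)*r^2*t + 2*(1-α)*r*Real.log (1+t*r)) (L t) t := by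
      intro t ht
      have hd1 : HasDerivAt (fun t : ℝ => (2*α-1)*r^2*t) ((2*α-1)*r^2) t := by
        simpa using (hasDerivAt_id t).const_mul ((2*α-1)*r^2)
      have hd2 : HasDerivAt (fun t : ℝ => 1 + t*r) r t := by
        simpa using (hasDerivAt_mul_const r).const_add 1
      have hd3 : HasDerivAt (fun t : ℝ => Real.log (1+t*r)) ((1+t*r)⁻¹ * r) t :=
        HasDerivAt.comp (h₂ := Real.log) t (Real.hasDerivAt_log (ne_of_gt (hposL t ht))) hd2
      have := hd1.add ((hd3.const_mul (2*(1-α)*r)))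
      refine this.congr_deriv ?_
      rw [hLdef]
      have := hposL t ht
      have : 1 + r*t ≠ 0 := by rw [mul_comm]; exact this.ne'
      field_simp
    have hLval : (∫ t in (0:ℝ)..1, L t) = (2*α-1)*r^2 + 2*(1-α)*r*Real.log (1+r) := by
      rw [intervalIntegral.integral_eq_sub_of_hasDerivAt hΨ hLint]
      norm_num
    -- re ≤ r * norm
    have hre_fz : ((starRingEnd ℂ) z * f z).re ≤ r * ‖f z‖ := by
      have h1 := Complex.re_le_norm ((starRingEnd ℂ) z * f z)
      have h2 : ‖(starRingEnd ℂ) z * f z‖ = r * ‖f z‖ := by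
        rw [norm_mul, RCLike.norm_conj]
      linarith
    have hint_eq : (∫ t in (0:ℝ)..1, ((starRingEnd ℂ) z * F' t).re)
        = ((starRingEnd ℂ) z * f z).re := by
      have h1 : (∫ t in (0:ℝ)..1, (starRingEnd ℂ) z * F' t) = (starRingEnd ℂ) z * f z := by
        rw [intervalIntegral.integral_const_mul, hFTC]
      have h2 := Complex.reCLM.intervalIntegral_comp_comm (hF'int.const_mul ((starRingEnd ℂ) z))
      simp only [Complex.reCLM_apply] at h2
      rw [h2, h1]
    rw [hint_eq] at hmono
    rw [hLval] at hmono
    -- conclude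
    rw [hsum_neg]
    have hfinal : (2*α-1)*r + 2*(1-α)*Real.log (1+r) ≤ ‖f z‖ := by
      have h3 : r * ((2*α-1)*r + 2*(1-α)*Real.log (1+r)) ≤ r * ‖f z‖ := by
        nlinarith [hmono, hre_fz]
      exact le_of_mul_le_mul_left h3 hrpos
    linarith [hfinal]
  · -- UPPER BOUND
    set U : ℝ → ℝ := fun t => (2*α-1)*r + 2*(1-α)*(r/(1-t*r)) with hUdef
    have hUcont : ContinuousOn U (Set.uIcc (0:ℝ) 1) := by
      apply ContinuousOn.add continuousOn_const
      apply ContinuousOn.mul continuousOn_const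
      exact ContinuousOn.div continuousOn_const
        (continuousOn_const.sub (continuousOn_id.mul continuousOn_const))
        (fun t ht => ne_of_gt (hposU t ht))
    have hUint : IntervalIntegrable U volume 0 1 := hUcont.intervalIntegrable
    have hptw : ∀ᵐ t ∂(volume.restrict (Set.uIoc (0:ℝ) 1)), ‖F' t‖ ≤ U t := by
      filter_upwards [MeasureTheory.ae_restrict_mem measurableSet_uIoc] with t ht
      rw [Set.uIoc_of_le (by norm_num : (0:ℝ) ≤ 1)] at ht
      have ht' : t ∈ Set.uIcc (0:ℝ) 1 := by
        rw [huIcc]; exact ⟨le_of_lt ht.1, ht.2⟩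
      have hmem' := hmem t ht'
      have hs : ‖(t:ℂ)*z‖ = t*r := hnormtz t (le_of_lt ht.1)
      have hbd := (deriv_two_sided α hα0 hα1 h g hh hg hh1 hg1 hcond ((t:ℂ)*z) hmem').2
      rw [hs] at hbd
      set A := deriv h ((t:ℂ)*z)
      set B := deriv g ((t:ℂ)*z)
      have hn1 : ‖F' t‖ ≤ (‖A‖ + ‖B‖) * r := by
        rw [hF'def]
        calc ‖A * z + (starRingEnd ℂ) (B * z)‖ ≤ ‖A * z‖ + ‖(starRingEnd ℂ) (B * z)‖ :=
              norm_add_le _ _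
          _ = (‖A‖ + ‖B‖) * r := by
              rw [RCLike.norm_conj, norm_mul, norm_mul]; ring
      have hid : U t = (α + (1 - α) * ((1 + t*r) / (1 - t*r))) * r := by
        rw [hUdef]
        have := hposU t ht'
        have : 1 - r*t ≠ 0 := by rw [mul_comm]; exact this.ne'
        field_simp
        ring
      rw [hid]
      have hmul : (‖A‖ + ‖B‖) * r ≤ (α + (1 - α) * ((1 + t*r) / (1 - t*r))) * r :=
        mul_le_mul_of_nonneg_right hbd hr0
      linarith [hmul, hn1]
    have hup := intervalIntegral.norm_integral_le_abs_of_norm_le hptw hUint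
    rw [hFTC] at hup
    -- value of ∫ U
    have hΦ : ∀ t ∈ Set.uIcc (0:ℝ) 1,
        HasDerivAt (fun t => (2*α-1)*r*t - 2*(1-α)*Real.log (1-t*r)) (U t) t := by
      intro t ht
      have hd1 : HasDerivAt (fun t : ℝ => (2*α-1)*r*t) ((2*α-1)*r) t := by
        simpa using (hasDerivAt_id t).const_mul ((2*α-1)*r)
      have hd2 : HasDerivAt (fun t : ℝ => 1 - t*r) (-r) t := by
        simpa using (hasDerivAt_mul_const r).const_sub 1
      have hd3 : HasDerivAt (fun t : ℝ => Real.log (1-t*r)) ((1-t*r)⁻¹ * (-r)) t :=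
        HasDerivAt.comp (h₂ := Real.log) t (Real.hasDerivAt_log (ne_of_gt (hposU t ht))) hd2
      have := hd1.sub (hd3.const_mul (2*(1-α)))
      refine this.congr_deriv ?_
      rw [hUdef]
      have := hposU t ht
      have : 1 - r*t ≠ 0 := by rw [mul_comm]; exact this.ne'
      field_simp
      ring
    have hUval : (∫ t in (0:ℝ)..1, U t) = (2*α-1)*r - 2*(1-α)*Real.log (1-r) := by
      rw [intervalIntegral.integral_eq_sub_of_hasDerivAt hΦ hUint]
      norm_num
    have hUnonneg : 0 ≤ ∫ t in (0:ℝ)..1, U t := by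
      apply intervalIntegral.integral_nonneg (by norm_num : (0:ℝ) ≤ 1)
      intro t ht
      have ht' : t ∈ Set.uIcc (0:ℝ) 1 := by rw [huIcc]; exact ht
      have hp := hposU t ht'
      have hrr : r ≤ r / (1 - t*r) := by
        rw [le_div_iff₀ hp]
        nlinarith [mul_nonneg (mul_nonneg ht.1 hr0) hr0]
      have h1α : (0:ℝ) ≤ 2*(1-α) := by linarith
      have hmul2 : 2*(1-α)*r ≤ 2*(1-α)*(r/(1-t*r)) := mul_le_mul_of_nonneg_left hrr h1α
      simp only [hUdef]
      linarith [hmul2]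
    rw [_root_.abs_of_nonneg hUnonneg, hUval] at hup
    rw [hsum_pos]
    linarith [hup]
end

section
/- Let β ∈ [0,1) and suppose h, g are holomorphic on 𝔻 with h(z) = z + ∑_{n≥2} a_n z^n, g(z) = ∑_{n≥2} b_n z^n, and Re(h(z)/z) - β > |g(z)/z| for all z ∈ 𝔻\{0} (with the natural value at 0). Then for every n ≥ 2, |a_n| + |b_n| ≤ 2(1-β). -/
open Complex Metric MeasureTheory Real Filter Topology intervalIntegral
open scoped ComplexConjugate

/-! For a unimodular `ε`, the function `p = (h + ε g) / z` has Taylor coefficients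
`cₖ = aₖ₊₁ + ε bₖ₊₁`, with `c₀ = 1`, and `Re p > β` on the punctured disc; choosing `ε` so that
`aₙ` and `ε bₙ` have the same argument, it suffices to show Carathéodory's estimate
`‖cₙ‖ ≤ 2 (Re c₀ - β)`. On the circle of radius `r`, `conj p` has no positive frequencies, so
`π cₙ rⁿ` is the `n`-th Fourier coefficient of the nonnegative function `Re p - β`; its modulus is
therefore at most `∫ (Re p - β) = 2π (Re c₀ - β)`. Letting `r → 1` gives the estimate. -/

theorem HasSum.succ_coeff_div {𝕜 : Type*} [NormedField 𝕜] {a : ℕ → 𝕜} {z s : 𝕜}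
    (hs : HasSum (fun k => a k * z ^ k) s) (ha : a 0 = 0) (hz : z ≠ 0) :
    HasSum (fun k => a (k + 1) * z ^ k) (s / z) := by
  have hshift := (hasSum_nat_add_iff' 1).2 hs
  simp only [Finset.range_one, Finset.sum_singleton, ha, zero_mul, sub_zero] at hshift
  convert hshift.div_const z using 2 with k
  rw [pow_succ, ← mul_assoc, mul_div_cancel_right₀ _ hz]

theorem summable_norm_mul_pow_of_summable {𝕜 : Type*} [NormedField 𝕜] {c : ℕ → 𝕜} {z : 𝕜}
    {r : ℝ} (hs : Summable fun k => c k * z ^ k) (hr : |r| < ‖z‖) :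
    Summable fun k => ‖c k‖ * |r| ^ k := by
  have hz : 0 < ‖z‖ := (abs_nonneg r).trans_lt hr
  set q := |r| / ‖z‖
  have hq : Summable fun k => q ^ k :=
    summable_geometric_of_lt_one (by positivity) ((div_lt_one hz).2 hr)
  refine summable_of_isBigO_nat hq <|
    ((hs.tendsto_atTop_zero.isBigO_one ℝ).norm_left.mul (Asymptotics.isBigO_refl _ _)).congr
      (fun k => ?_) (fun k => one_mul _)
  rw [norm_mul, norm_pow, div_pow, mul_assoc, mul_div_cancel₀ _ (by positivity)]

theorem integral_exp_int_mul_I (m : ℤ) :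
    ∫ θ in (0)..2 * π, exp (m * θ * I) = if m = 0 then 2 * π else 0 := by
  split_ifs with hm
  · simp [hm]
  · have hc : (m : ℂ) * I ≠ 0 := by simp [hm]
    have h2π : (m : ℂ) * I * ((2 * π : ℝ) : ℂ) = m * (2 * π * I) := by push_cast; ring
    simp_rw [mul_right_comm _ _ I]
    rw [integral_exp_mul_complex hc, h2π, exp_int_mul_two_pi_mul_I]
    simp

theorem norm_coeff_mul_circleMap_pow (c : ℕ → ℂ) (r θ : ℝ) (k : ℕ) :
    ‖c k * circleMap 0 r θ ^ k‖ = ‖c k‖ * |r| ^ k := by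
  rw [norm_mul, norm_pow, norm_circleMap_zero]

noncomputable def circleSeries (c : ℕ → ℂ) (r θ : ℝ) : ℂ := ∑' k, c k * circleMap 0 r θ ^ k

section circleSeries

variable {c : ℕ → ℂ} {r : ℝ}

theorem continuous_circleSeries (hc : Summable fun k => ‖c k‖ * |r| ^ k) :
    Continuous (circleSeries c r) :=
  continuous_tsum (fun k => continuous_const.mul ((continuous_circleMap 0 r).pow k)) hc
    (fun k θ => (norm_coeff_mul_circleMap_pow c r θ k).le)

theorem hasSum_integral_circleSeries_mul_exp (hc : Summable fun k => ‖c k‖ * |r| ^ k) (m : ℤ) :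
    HasSum (fun k : ℕ => c k * r ^ k * ∫ θ in (0)..2 * π, exp ((k + m : ℤ) * θ * I))
      (∫ θ in (0)..2 * π, circleSeries c r θ * exp (m * θ * I)) := by
  have hterm : ∀ (k : ℕ) (θ : ℝ), c k * circleMap 0 r θ ^ k * exp (m * θ * I) =
      c k * r ^ k * exp ((k + m : ℤ) * θ * I) := by
    intro k θ
    rw [circleMap_zero, mul_pow, ← Complex.exp_nat_mul, mul_assoc, mul_assoc, ← Complex.exp_add]
    push_cast
    ring_nf
  simp_rw [← intervalIntegral.integral_const_mul, ← hterm]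
  refine intervalIntegral.hasSum_integral_of_dominated_convergence (fun k _ => ‖c k‖ * |r| ^ k)
    (fun k => by fun_prop) (fun k => ae_of_all _ fun θ _ => ?_) (ae_of_all _ fun _ _ => hc)
    intervalIntegrable_const (ae_of_all _ fun θ _ => ?_)
  · simp [Complex.norm_exp]
  · exact (hc.of_norm_bounded (fun k => (norm_coeff_mul_circleMap_pow c r θ k).le)).hasSum.mul_right _

theorem integral_circleSeries_mul_exp_neg (hc : Summable fun k => ‖c k‖ * |r| ^ k) (n : ℕ) :
    ∫ θ in (0)..2 * π, circleSeries c r θ * exp ((-n : ℤ) * θ * I) = 2 * π * (c n * r ^ n) := by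
  refine (hasSum_integral_circleSeries_mul_exp hc (-n)).unique ?_
  convert hasSum_ite_eq n (2 * π * (c n * r ^ n)) using 2 with k
  rw [integral_exp_int_mul_I]
  split_ifs <;> simp_all [mul_comm]
  omega

theorem integral_circleSeries_mul_exp_of_ne_zero (hc : Summable fun k => ‖c k‖ * |r| ^ k) {n : ℕ}
    (hn : n ≠ 0) : ∫ θ in (0)..2 * π, circleSeries c r θ * exp (n * θ * I) = 0 := by
  refine (hasSum_integral_circleSeries_mul_exp hc n).unique ?_
  convert hasSum_zero with k
  rw [integral_exp_int_mul_I, if_neg (by omega), ofReal_zero, mul_zero]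

theorem integral_conj_circleSeries_mul_exp_neg (hc : Summable fun k => ‖c k‖ * |r| ^ k) {n : ℕ}
    (hn : n ≠ 0) : ∫ θ in (0)..2 * π, conj (circleSeries c r θ) * exp ((-n : ℤ) * θ * I) = 0 := by
  have hconj : ∀ θ : ℝ, conj (circleSeries c r θ) * exp ((-n : ℤ) * θ * I) =
      conj (circleSeries c r θ * exp (n * θ * I)) := fun θ => by
    rw [map_mul, ← Complex.exp_conj, map_mul, map_mul, conj_I, conj_ofReal, map_natCast]
    push_cast
    ring_nf
  rw [integral_congr fun θ _ => hconj θ, intervalIntegral_conj,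
    integral_circleSeries_mul_exp_of_ne_zero hc hn, map_zero]

theorem integral_re_circleSeries (hc : Summable fun k => ‖c k‖ * |r| ^ k) :
    ∫ θ in (0)..2 * π, (circleSeries c r θ).re = 2 * π * (c 0).re := by
  have h0 := integral_circleSeries_mul_exp_neg hc 0
  simp only [CharP.cast_eq_zero, neg_zero, Int.cast_zero, zero_mul, Complex.exp_zero, mul_one,
    pow_zero] at h0
  rw [← re_ofReal_mul, ofReal_mul, ofReal_ofNat, ← h0]
  exact intervalIntegral_re ((continuous_circleSeries hc).intervalIntegrable _ _)

theorem norm_coeff_mul_pow_le (hc : Summable fun k => ‖c k‖ * |r| ^ k) {β : ℝ}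
    (hre : ∀ θ, β ≤ (circleSeries c r θ).re) {n : ℕ} (hn : n ≠ 0) :
    ‖c n‖ * |r| ^ n ≤ 2 * ((c 0).re - β) := by
  set f := circleSeries c r
  set e : ℝ → ℂ := fun θ => exp ((-n : ℤ) * θ * I)
  have hf : Continuous f := continuous_circleSeries hc
  have hcoeff : ∫ θ in (0)..2 * π, (((f θ).re - β : ℝ) : ℂ) * e θ = π * (c n * r ^ n) := by
    have hsplit : ∀ θ, (((f θ).re - β : ℝ) : ℂ) * e θ =
        (f θ * e θ + conj (f θ) * e θ) / 2 - β * e θ :=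
      fun θ => by rw [ofReal_sub, re_eq_add_conj]; ring
    have he : ∫ θ in (0)..2 * π, e θ = 0 := by
      rw [integral_exp_int_mul_I, if_neg (by omega), ofReal_zero]
    simp_rw [hsplit]
    rw [intervalIntegral.integral_sub, intervalIntegral.integral_div, intervalIntegral.integral_add,
      intervalIntegral.integral_const_mul, integral_circleSeries_mul_exp_neg hc n,
      integral_conj_circleSeries_mul_exp_neg hc hn, he]
    · ring
    all_goals exact Continuous.intervalIntegrable (by fun_prop) _ _
  have hmass : ∫ θ in (0)..2 * π, ((f θ).re - β) = π * (2 * ((c 0).re - β)) := by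
    rw [intervalIntegral.integral_sub, integral_re_circleSeries hc, intervalIntegral.integral_const,
      smul_eq_mul]
    · ring
    all_goals exact Continuous.intervalIntegrable (by fun_prop) _ _
  refine le_of_mul_le_mul_left ?_ pi_pos
  calc π * (‖c n‖ * |r| ^ n) = ‖∫ θ in (0)..2 * π, (((f θ).re - β : ℝ) : ℂ) * e θ‖ := by
        rw [hcoeff, norm_mul, norm_mul, norm_real, norm_pow, norm_real,
          Real.norm_of_nonneg pi_pos.le, Real.norm_eq_abs]
    _ ≤ ∫ θ in (0)..2 * π, ‖(((f θ).re - β : ℝ) : ℂ) * e θ‖ :=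
        norm_integral_le_integral_norm (by positivity)
    _ = ∫ θ in (0)..2 * π, ((f θ).re - β) := integral_congr fun θ _ => by
        rw [norm_mul, norm_real, Real.norm_of_nonneg (sub_nonneg.2 (hre θ))]
        simp [e, Complex.norm_exp]
    _ = π * (2 * ((c 0).re - β)) := hmass

end circleSeries

theorem norm_coeff_le_of_le_re {c : ℕ → ℂ} {p : ℂ → ℂ} {β : ℝ}
    (hp : ∀ z ∈ ball (0 : ℂ) 1, z ≠ 0 → HasSum (fun k => c k * z ^ k) (p z))
    (hre : ∀ z ∈ ball (0 : ℂ) 1, z ≠ 0 → β ≤ (p z).re) {n : ℕ} (hn : n ≠ 0) :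
    ‖c n‖ ≤ 2 * ((c 0).re - β) := by
  have hr : ∀ r ∈ Set.Ioo (0 : ℝ) 1, ‖c n‖ * r ^ n ≤ 2 * ((c 0).re - β) := by
    rintro r ⟨hr0, hr1⟩
    obtain ⟨s, hrs, hs1⟩ := exists_between hr1
    have hs0 : 0 < s := hr0.trans hrs
    have hs : (s : ℂ) ∈ ball (0 : ℂ) 1 := by simpa [abs_of_pos hs0] using hs1
    have hc : Summable fun k => ‖c k‖ * |r| ^ k :=
      summable_norm_mul_pow_of_summable (hp s hs (ofReal_ne_zero.2 hs0.ne')).summable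
        (by simpa [abs_of_pos hr0, abs_of_pos hs0] using hrs)
    have hcircle : ∀ θ, circleMap 0 r θ ∈ ball (0 : ℂ) 1 ∧ circleMap 0 r θ ≠ 0 := fun θ =>
      ⟨by simpa [abs_of_pos hr0] using hr1, circleMap_ne_center hr0.ne'⟩
    have hre' : ∀ θ, β ≤ (circleSeries c r θ).re := fun θ => by
      rw [circleSeries, (hp _ (hcircle θ).1 (hcircle θ).2).tsum_eq]
      exact hre _ (hcircle θ).1 (hcircle θ).2
    simpa [abs_of_pos hr0] using norm_coeff_mul_pow_le hc hre' hn
  have hcont : Continuous fun r : ℝ => ‖c n‖ * r ^ n := by fun_prop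
  have hlim : Tendsto (fun r : ℝ => ‖c n‖ * r ^ n) (𝓝[<] 1) (𝓝 ‖c n‖) :=
    (hcont.tendsto' 1 _ (by simp)).mono_left nhdsWithin_le_nhds
  exact le_of_tendsto hlim (eventually_of_mem (Ioo_mem_nhdsLT zero_lt_one) hr)

theorem Complex.exists_norm_eq_one_norm_add_mul_eq (a b : ℂ) :
    ∃ ε : ℂ, ‖ε‖ = 1 ∧ ‖a + ε * b‖ = ‖a‖ + ‖b‖ := by
  refine ⟨exp ((arg a - arg b : ℝ) * I), norm_exp_ofReal_mul_I _, ?_⟩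
  have hb : exp ((arg a - arg b : ℝ) * I) * b = ‖b‖ * exp (arg a * I) := by
    conv_lhs => arg 2; rw [← norm_mul_exp_arg_mul_I b]
    rw [mul_left_comm, ← Complex.exp_add]
    push_cast
    ring_nf
  rw [hb]
  conv_lhs => arg 1; arg 1; rw [← norm_mul_exp_arg_mul_I a]
  rw [← add_mul, norm_mul, norm_exp_ofReal_mul_I, mul_one, ← ofReal_add, norm_real,
    Real.norm_of_nonneg (by positivity)]

theorem stmt_19_general (β : ℝ) (h g : ℂ → ℂ) (a b : ℕ → ℂ)
    (ha0 : a 0 = 0) (ha1 : a 1 = 1) (hb0 : b 0 = 0) (hb1 : b 1 = 0)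
    (hha : ∀ z ∈ Metric.ball (0 : ℂ) 1, HasSum (fun n : ℕ => a n * z ^ n) (h z))
    (hhb : ∀ z ∈ Metric.ball (0 : ℂ) 1, HasSum (fun n : ℕ => b n * z ^ n) (g z))
    (hcond : ∀ z ∈ Metric.ball (0 : ℂ) 1, z ≠ 0 → (h z / z).re - β > ‖g z / z‖) :
    ∀ n : ℕ, 2 ≤ n → ‖a n‖ + ‖b n‖ ≤ 2 * (1 - β) := by
  intro n hn
  obtain ⟨m, rfl⟩ : ∃ m, n = m + 1 := ⟨n - 1, by omega⟩
  obtain ⟨ε, hε, hεab⟩ := exists_norm_eq_one_norm_add_mul_eq (a (m + 1)) (b (m + 1))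
  have hseries : ∀ z ∈ ball (0 : ℂ) 1, z ≠ 0 →
      HasSum (fun k => (a (k + 1) + ε * b (k + 1)) * z ^ k) ((h z + ε * g z) / z) := by
    intro z hz hz0
    simpa [add_mul, mul_assoc, add_div, mul_div_assoc] using
      ((hha z hz).succ_coeff_div ha0 hz0).add (((hhb z hz).succ_coeff_div hb0 hz0).mul_left ε)
  have hre : ∀ z ∈ ball (0 : ℂ) 1, z ≠ 0 → β ≤ ((h z + ε * g z) / z).re := by
    intro z hz hz0
    have hεg : -‖g z / z‖ ≤ (ε * (g z / z)).re := by
      simpa [hε] using neg_le_of_abs_le (abs_re_le_norm (ε * (g z / z)))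
    rw [add_div, mul_div_assoc, add_re]
    linarith [hcond z hz hz0]
  simpa [ha1, hb1, hεab] using norm_coeff_le_of_le_re hseries hre (n := m) (by omega)

theorem stmt_19 (β : ℝ) (hβ0 : 0 ≤ β) (hβ1 : β < 1) (h g : ℂ → ℂ) (a b : ℕ → ℂ)
    (ha0 : a 0 = 0) (ha1 : a 1 = 1) (hb0 : b 0 = 0) (hb1 : b 1 = 0)
    (hha : ∀ z ∈ Metric.ball (0 : ℂ) 1, HasSum (fun n : ℕ => a n * z ^ n) (h z))
    (hhb : ∀ z ∈ Metric.ball (0 : ℂ) 1, HasSum (fun n : ℕ => b n * z ^ n) (g z))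
    (hcond : ∀ z ∈ Metric.ball (0 : ℂ) 1, z ≠ 0 → (h z / z).re - β > ‖g z / z‖) :
    ∀ n : ℕ, 2 ≤ n → ‖a n‖ + ‖b n‖ ≤ 2 * (1 - β) :=
  stmt_19_general β h g a b ha0 ha1 hb0 hb1 hha hhb hcond
end
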